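/- arXiv:2408.06888 — 3 statements merged into one kernel-verified Lean document; each statement's English description precedes it below -/
import Mathlib

section
/- Let ψ satisfy ψ''(ξ) = (γ²/u̇₀²)·((v₀+ξ)ψ(ξ) − (ü₀/γ)ψ'(ξ)) and let K(ξ,ζ) := (u̇₀/γ)·(ψ(ξ)ψ'(ζ) − ψ'(ξ)ψ(ζ))/(ξ−ζ) for ξ ≠ ζ. Then (∂_ξ + ∂_ζ)K(ξ,ζ) = −(γ/u̇₀)·(ψ(ξ)ψ(ζ) + (ü₀/u̇₀)·K(ξ,ζ)) for all ξ ≠ ζ. -/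
/-- Derivative identity for the Christoffel–Darboux type kernel:
`(∂_ξ + ∂_ζ) K(ξ,ζ) = −(γ/u̇₀)(ψ(ξ)ψ(ζ) + (ü₀/u̇₀) K(ξ,ζ))` for `ξ ≠ ζ`. -/
theorem stmt3 (γ udot uddot v₀ : ℝ) (hγ : γ ≠ 0) (hudot : udot ≠ 0)
    (ψ : ℝ → ℝ) (hψ : Differentiable ℝ ψ) (hψ' : Differentiable ℝ (deriv ψ))
    (hODE : ∀ ξ : ℝ,
      deriv (deriv ψ) ξ =
        (γ ^ 2 / udot ^ 2) * ((v₀ + ξ) * ψ ξ - (uddot / γ) * deriv ψ ξ))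
    (K : ℝ → ℝ → ℝ)
    (hK : ∀ ξ ζ : ℝ, ξ ≠ ζ →
      K ξ ζ = (udot / γ) * (ψ ξ * deriv ψ ζ - deriv ψ ξ * ψ ζ) / (ξ - ζ)) :
    ∀ ξ ζ : ℝ, ξ ≠ ζ →
      deriv (fun x => K x ζ) ξ + deriv (fun y => K ξ y) ζ =
        -(γ / udot) * (ψ ξ * ψ ζ + (uddot / udot) * K ξ ζ) := by
  intro ξ ζ hξζ
  have hne : ξ - ζ ≠ 0 := sub_ne_zero.mpr hξζ
  set c := udot / γ with hc
  -- derivative in the first variable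
  have hx : HasDerivAt (fun x => c * (ψ x * deriv ψ ζ - deriv ψ x * ψ ζ) / (x - ζ))
      ((c * (deriv ψ ξ * deriv ψ ζ - deriv (deriv ψ) ξ * ψ ζ) * (ξ - ζ)
        - c * (ψ ξ * deriv ψ ζ - deriv ψ ξ * ψ ζ) * 1) / (ξ - ζ) ^ 2) ξ := by
    have hN : HasDerivAt (fun x => c * (ψ x * deriv ψ ζ - deriv ψ x * ψ ζ))
        (c * (deriv ψ ξ * deriv ψ ζ - deriv (deriv ψ) ξ * ψ ζ)) ξ := by
      exact (((hψ ξ).hasDerivAt.mul_const _).sub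
        (((hψ' ξ).hasDerivAt).mul_const _)).const_mul c
    have hD : HasDerivAt (fun x : ℝ => x - ζ) 1 ξ := (hasDerivAt_id ξ).sub_const ζ
    exact hN.div hD hne
  -- derivative in the second variable
  have hy : HasDerivAt (fun y => c * (ψ ξ * deriv ψ y - deriv ψ ξ * ψ y) / (ξ - y))
      ((c * (ψ ξ * deriv (deriv ψ) ζ - deriv ψ ξ * deriv ψ ζ) * (ξ - ζ)
        - c * (ψ ξ * deriv ψ ζ - deriv ψ ξ * ψ ζ) * (-1)) / (ξ - ζ) ^ 2) ζ := by
    have hM : HasDerivAt (fun y => c * (ψ ξ * deriv ψ y - deriv ψ ξ * ψ y))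
        (c * (ψ ξ * deriv (deriv ψ) ζ - deriv ψ ξ * deriv ψ ζ)) ζ := by
      exact ((((hψ' ζ).hasDerivAt).const_mul _).sub
        (((hψ ζ).hasDerivAt).const_mul _)).const_mul c
    have hD : HasDerivAt (fun y : ℝ => ξ - y) (-1) ζ := by
      simpa using ((hasDerivAt_id ζ).const_sub ξ)
    exact hM.div hD hne
  -- K agrees with the formula near ξ (resp. ζ)
  have hev1 : (fun x => K x ζ) =ᶠ[nhds ξ]
      (fun x => c * (ψ x * deriv ψ ζ - deriv ψ x * ψ ζ) / (x - ζ)) := by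
    filter_upwards [isOpen_compl_singleton.mem_nhds
      (by simpa [Set.mem_compl_iff] using hξζ : ξ ∈ ({ζ}ᶜ : Set ℝ))] with x hx
    exact hK x ζ (by simpa [Set.mem_compl_iff] using hx)
  have hev2 : (fun y => K ξ y) =ᶠ[nhds ζ]
      (fun y => c * (ψ ξ * deriv ψ y - deriv ψ ξ * ψ y) / (ξ - y)) := by
    filter_upwards [isOpen_compl_singleton.mem_nhds
      (by simpa [Set.mem_compl_iff] using hξζ.symm : ζ ∈ ({ξ}ᶜ : Set ℝ))] with y hy
    exact hK ξ y (by simpa [Set.mem_compl_iff, ne_comm] using hy)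
  have d1 : deriv (fun x => K x ζ) ξ
      = (c * (deriv ψ ξ * deriv ψ ζ - deriv (deriv ψ) ξ * ψ ζ) * (ξ - ζ)
        - c * (ψ ξ * deriv ψ ζ - deriv ψ ξ * ψ ζ) * 1) / (ξ - ζ) ^ 2 := by
    rw [hev1.deriv_eq]; exact hx.deriv
  have d2 : deriv (fun y => K ξ y) ζ
      = (c * (ψ ξ * deriv (deriv ψ) ζ - deriv ψ ξ * deriv ψ ζ) * (ξ - ζ)
        - c * (ψ ξ * deriv ψ ζ - deriv ψ ξ * ψ ζ) * (-1)) / (ξ - ζ) ^ 2 := by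
    rw [hev2.deriv_eq]; exact hy.deriv
  rw [d1, d2, hK ξ ζ hξζ, hODE ξ, hODE ζ, hc]
  field_simp
  ring
end

section
/- Fix n ≥ 1 and real numbers q, p, q', p', ψ ≠ 0. Define η_m := (q/ψ − 1)^m, and for each 1 ≤ k ≤ n set a_k := η_{n−k}·q, b_k := η_{k−1}·p, a_k' := (η_{n−k}·q)' and b_k' := (η_{k−1}·p)' (derivatives via the product and chain rules with given values q', p', ψ'). Then ∑_{k=1}^{n} (a_k'·b_k − b_k'·a_k) = n·(q'p − p'q)·η_{n−1}. -/
/-!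
Since `η_a η_b = η_{a+b}` and `η_m' = m η' η_{m-1}`, the `k`-th term of the Hamiltonian is
`(q'p - p'q) η_{n-1}` plus `((n - k) - (k - 1)) η' q p η_{n-2}`. The coefficients
`(n - k) - (k - 1)` are exchanged with their negatives by `k ↦ n + 1 - k`, so they sum to zero.
-/

open Finset

theorem sum_Icc_sub_eq_sum_Icc_sub_one (n : ℕ) :
    ∑ k ∈ Icc 1 n, (n - k) = ∑ k ∈ Icc 1 n, (k - 1) := by
  refine sum_nbij' (fun k => n + 1 - k) (fun k => n + 1 - k) ?_ ?_ ?_ ?_ ?_ <;>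
    intro k hk <;> grind [coe_Icc]

section

variable {R : Type*} [CommRing R]

/-- The derivative of `η ^ m * x` by the product and chain rules, where `η'` and `x'` stand for
the derivatives of `η` and `x`. -/
def powMulDeriv (η η' x x' : R) (m : ℕ) : R :=
  m * η' * η ^ (m - 1) * x + η ^ m * x'

def orderHamiltonian (η η' q q' p p' : R) (n : ℕ) : R :=
  ∑ k ∈ Icc 1 n,
    (powMulDeriv η η' q q' (n - k) * (η ^ (k - 1) * p) -
      powMulDeriv η η' p p' (k - 1) * (η ^ (n - k) * q))

theorem natCast_mul_pow_pred_mul_pow (x : R) (m j : ℕ) :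
    (m : R) * x ^ (m - 1) * x ^ j = m * x ^ (m + j - 1) := by
  cases m with
  | zero => simp
  | succ m => rw [mul_assoc, ← pow_add]; congr 3; omega

theorem orderHamiltonian_term {η η' q q' p p' : R} {n k : ℕ} (hk : 1 ≤ k) (hkn : k ≤ n) :
    powMulDeriv η η' q q' (n - k) * (η ^ (k - 1) * p) -
        powMulDeriv η η' p p' (k - 1) * (η ^ (n - k) * q) =
      (((n - k : ℕ) : R) - ((k - 1 : ℕ) : R)) * η' * q * p * η ^ (n - 2) +
        (q' * p - p' * q) * η ^ (n - 1) := by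
  have h₁ := natCast_mul_pow_pred_mul_pow η (n - k) (k - 1)
  have h₂ := natCast_mul_pow_pred_mul_pow η (k - 1) (n - k)
  have h₃ : η ^ (n - k) * η ^ (k - 1) = η ^ (n - 1) := by rw [← pow_add]; congr 1; omega
  rw [show n - k + (k - 1) - 1 = n - 2 by omega] at h₁
  rw [show k - 1 + (n - k) - 1 = n - 2 by omega] at h₂
  unfold powMulDeriv
  linear_combination (η' * q * p) * h₁ - (η' * p * q) * h₂ + (q' * p - p' * q) * h₃

theorem orderHamiltonian_eq (η η' q q' p p' : R) (n : ℕ) :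
    orderHamiltonian η η' q q' p p' n = n * (q' * p - p' * q) * η ^ (n - 1) := by
  have hsum : ∑ k ∈ Icc 1 n, (((n - k : ℕ) : R) - ((k - 1 : ℕ) : R)) = 0 := by
    rw [sum_sub_distrib, sub_eq_zero, ← Nat.cast_sum, ← Nat.cast_sum,
      sum_Icc_sub_eq_sum_Icc_sub_one]
  rw [orderHamiltonian, sum_congr rfl fun k hk =>
      orderHamiltonian_term (mem_Icc.1 hk).1 (mem_Icc.1 hk).2,
    sum_add_distrib, ← sum_mul, ← sum_mul, ← sum_mul, ← sum_mul, hsum, sum_const,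
    Nat.card_Icc, Nat.add_sub_cancel, nsmul_eq_mul]
  ring

end

theorem stmt9_general (n : ℕ) (q p q' p' ψ ψ' : ℝ) :
    (∑ k ∈ Icc 1 n,
      ((((n - k : ℕ) : ℝ) / ψ * (q' - ψ' / ψ * q) * (q / ψ - 1) ^ (n - k - 1) * q +
          (q / ψ - 1) ^ (n - k) * q') * ((q / ψ - 1) ^ (k - 1) * p) -
        (((k - 1 : ℕ) : ℝ) / ψ * (q' - ψ' / ψ * q) * (q / ψ - 1) ^ (k - 2) * p +
          (q / ψ - 1) ^ (k - 1) * p') * ((q / ψ - 1) ^ (n - k) * q))) =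
      (n : ℝ) * (q' * p - p' * q) * (q / ψ - 1) ^ (n - 1) := by
  rw [← orderHamiltonian_eq (q / ψ - 1) ((q' - ψ' / ψ * q) / ψ), orderHamiltonian]
  refine sum_congr rfl fun k _ => ?_
  simp only [powMulDeriv, Nat.sub_sub]
  ring

/-- Lemma 3.1.15: with `η_m := (q/ψ − 1)^m`, `a_k := η_{n−k} q`, `b_k := η_{k−1} p`
and their derivatives computed via the product rule and the derivative formula for
`η_m`, the n-th order Hamiltonian collapses:
`∑_{k=1}^{n} (a_k' b_k − b_k' a_k) = n (q'p − p'q) η_{n−1}`. -/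
theorem stmt9 (n : ℕ) (hn : 1 ≤ n) (q p q' p' ψ ψ' : ℝ) (hψ : ψ ≠ 0) :
    (∑ k ∈ Icc 1 n,
      ((((n - k : ℕ) : ℝ) / ψ * (q' - ψ' / ψ * q) * (q / ψ - 1) ^ (n - k - 1) * q +
          (q / ψ - 1) ^ (n - k) * q') * ((q / ψ - 1) ^ (k - 1) * p) -
        (((k - 1 : ℕ) : ℝ) / ψ * (q' - ψ' / ψ * q) * (q / ψ - 1) ^ (k - 2) * p +
          (q / ψ - 1) ^ (k - 1) * p') * ((q / ψ - 1) ^ (n - k) * q))) =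
      (n : ℝ) * (q' * p - p' * q) * (q / ψ - 1) ^ (n - 1) :=
  stmt9_general n q p q' p' ψ ψ'
end

section
/- Let γ, u̇₀ ≠ 0 and ü₀, v₀ be real constants, ψ, q : ℝ → ℝ twice differentiable with ψ nonvanishing, μ a real constant, and χ₁ := (q/ψ − 1)·q. Suppose p := q' + (γ/u̇₀)·μ·q + (γ·ü₀/u̇₀²)·χ₁ (pointwise), and suppose q' satisfies (∂_τ μ) = −q². Define H := q'·p − p'·q. Then H = q'² − q·(q'' − (γ/u̇₀)·q³ + (γ·ü₀/u̇₀²)·q·(q'/ψ − ψ'·q/ψ²)), pointwise. -/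
section Momentum

variable {𝕜 : Type*} [NontriviallyNormedField 𝕜]

/-- The paper's `χ_{0,1}`, with `a = γ/u̇₀` and `b = γ ü₀/u̇₀²`. -/
noncomputable def firstOrderMomentum (a b : 𝕜) (q ψ μ : 𝕜 → 𝕜) (τ : 𝕜) : 𝕜 :=
  deriv q τ + a * μ τ * q τ + b * ((q τ / ψ τ - 1) * q τ)

variable {a b : 𝕜} {q ψ μ : 𝕜 → 𝕜} {τ : 𝕜}

theorem hasDerivAt_firstOrderMomentum (hq : DifferentiableAt 𝕜 q τ)
    (hq' : DifferentiableAt 𝕜 (deriv q) τ) (hψ : DifferentiableAt 𝕜 ψ τ) (hψ0 : ψ τ ≠ 0)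
    (hμ : DifferentiableAt 𝕜 μ τ) :
    HasDerivAt (firstOrderMomentum a b q ψ μ)
      (deriv (deriv q) τ + (a * deriv μ τ * q τ + a * μ τ * deriv q τ) +
        b * ((deriv q τ * ψ τ - q τ * deriv ψ τ) / ψ τ ^ 2 * q τ +
          (q τ / ψ τ - 1) * deriv q τ)) τ := by
  have hμq := (hμ.hasDerivAt.const_mul a).mul hq.hasDerivAt
  have hχ := ((hq.hasDerivAt.div hψ.hasDerivAt hψ0).sub_const 1).mul hq.hasDerivAt
  exact (hq'.hasDerivAt.add hμq).add (hχ.const_mul b)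

/-- The `μ`-terms cancel: `a μ q` contributes `a μ (q' q - q q') = 0` to `q' p - p' q`,
and `μ' = -q²` turns the remaining `-a μ' q²` into `a q⁴`. -/
theorem deriv_mul_firstOrderMomentum_sub (hq : DifferentiableAt 𝕜 q τ)
    (hq' : DifferentiableAt 𝕜 (deriv q) τ) (hψ : DifferentiableAt 𝕜 ψ τ) (hψ0 : ψ τ ≠ 0)
    (hμ : DifferentiableAt 𝕜 μ τ) (hμ' : deriv μ τ = -q τ ^ 2) :
    deriv q τ * firstOrderMomentum a b q ψ μ τ -
        deriv (firstOrderMomentum a b q ψ μ) τ * q τ =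
      deriv q τ ^ 2 - q τ * (deriv (deriv q) τ - a * q τ ^ 3 +
        b * q τ * (deriv q τ / ψ τ - deriv ψ τ * q τ / ψ τ ^ 2)) := by
  rw [(hasDerivAt_firstOrderMomentum hq hq' hψ hψ0 hμ).deriv, firstOrderMomentum, hμ']
  field_simp
  ring

end Momentum

theorem stmt19_general (γ udot uddot : ℝ)
    (ψ q : ℝ → ℝ)
    (hψ : Differentiable ℝ ψ)
    (hq : Differentiable ℝ q) (hq' : Differentiable ℝ (deriv q))
    (hψ0 : ∀ τ : ℝ, ψ τ ≠ 0)
    (μ : ℝ → ℝ) (hμ : Differentiable ℝ μ)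
    (hμ' : ∀ τ : ℝ, deriv μ τ = -(q τ) ^ 2)
    (p : ℝ → ℝ)
    (hp : ∀ τ : ℝ,
      p τ = deriv q τ + (γ / udot) * μ τ * q τ +
        (γ * uddot / udot ^ 2) * ((q τ / ψ τ - 1) * q τ)) :
    ∀ τ : ℝ,
      deriv q τ * p τ - deriv p τ * q τ =
        (deriv q τ) ^ 2 -
          q τ * (deriv (deriv q) τ - (γ / udot) * (q τ) ^ 3 +
            (γ * uddot / udot ^ 2) * q τ *
              (deriv q τ / ψ τ - deriv ψ τ * q τ / (ψ τ) ^ 2)) := by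
  obtain rfl : p = firstOrderMomentum (γ / udot) (γ * uddot / udot ^ 2) q ψ μ := funext hp
  intro τ
  exact deriv_mul_firstOrderMomentum_sub (hq τ) (hq' τ) (hψ τ) (hψ0 τ) (hμ τ) (hμ' τ)

/-- Lemma 4.2.1: with `χ₁ := (q/ψ − 1) q`, `p := q' + (γ/u̇₀) μ q + (γ ü₀/u̇₀²) χ₁`
and `μ' = −q²`, the first order Hamiltonian `H := q' p − p' q` equals
`q'² − q (q'' − (γ/u̇₀) q³ + (γ ü₀/u̇₀²) q (q'/ψ − ψ' q/ψ²))`. -/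
theorem stmt19 (γ udot uddot v₀ : ℝ) (hγ : γ ≠ 0) (hudot : udot ≠ 0)
    (ψ q : ℝ → ℝ)
    (hψ : Differentiable ℝ ψ) (hψ' : Differentiable ℝ (deriv ψ))
    (hq : Differentiable ℝ q) (hq' : Differentiable ℝ (deriv q))
    (hψ0 : ∀ τ : ℝ, ψ τ ≠ 0)
    (μ : ℝ → ℝ) (hμ : Differentiable ℝ μ)
    (hμ' : ∀ τ : ℝ, deriv μ τ = -(q τ) ^ 2)
    (p : ℝ → ℝ)
    (hp : ∀ τ : ℝ,
      p τ = deriv q τ + (γ / udot) * μ τ * q τ +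
        (γ * uddot / udot ^ 2) * ((q τ / ψ τ - 1) * q τ)) :
    ∀ τ : ℝ,
      deriv q τ * p τ - deriv p τ * q τ =
        (deriv q τ) ^ 2 -
          q τ * (deriv (deriv q) τ - (γ / udot) * (q τ) ^ 3 +
            (γ * uddot / udot ^ 2) * q τ *
              (deriv q τ / ψ τ - deriv ψ τ * q τ / (ψ τ) ^ 2)) :=
  stmt19_general γ udot uddot ψ q hψ hq hq' hψ0 μ hμ hμ' p hp
end
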